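/- Let ℓ ≥ 2 be an integer and fix L ≠ 0. (i) The map E ↦ a_r(E,L) is strictly increasing on the interval ((ℓ+1)/(2ℓ) · |L|^{2ℓ/(ℓ+1)}, ∞). (ii) Consequently, for all λ > 0 and all E, E' in the respective domains (i.e. E > (ℓ+1)/(2ℓ)|L|^{2ℓ/(ℓ+1)} and E' > (ℓ+1)/(2ℓ)|λL|^{2ℓ/(ℓ+1)}), if a_r(E', λL) = λ · a_r(E, L) then E' = λ^{2ℓ/(ℓ+1)} E. -/

import Mathlib

open Real

noncomputable section

/-- The effective potential `V*_L(r) = L²/(2r²) + r^{2ℓ}/(2ℓ)`. -/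
noncomputable def Veff (ℓ : ℕ) (L r : ℝ) : ℝ :=
  L ^ 2 / (2 * r ^ 2) + r ^ (2 * ℓ) / (2 * (ℓ : ℝ))

/-- The domain `D* = {(E,L) : E > 0, 0 < |L| < (2ℓE/(ℓ+1))^{(ℓ+1)/(2ℓ)}}`. -/
def Dstar (ℓ : ℕ) : Set (ℝ × ℝ) :=
  {q | 0 < q.1 ∧ 0 < |q.2| ∧
    |q.2| < (2 * (ℓ : ℝ) * q.1 / ((ℓ : ℝ) + 1)) ^ (((ℓ : ℝ) + 1) / (2 * (ℓ : ℝ)))}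

/-- The radial action `a_r(E,L) = (√2/π) ∫_{r_m}^{r_M} √(E − V*_L(r)) dr`. -/
noncomputable def aR (ℓ : ℕ) (rm rM : ℝ → ℝ → ℝ) (E L : ℝ) : ℝ :=
  (Real.sqrt 2 / π) * ∫ r in rm E L..rM E L, Real.sqrt (E - Veff ℓ L r)

/-- The minimum of the effective potential, `(ℓ+1)/(2ℓ)·|L|^{2ℓ/(ℓ+1)}`. -/
noncomputable def VeffMin (ℓ : ℕ) (L : ℝ) : ℝ :=
  ((ℓ : ℝ) + 1) / (2 * (ℓ : ℝ)) * |L| ^ (2 * (ℓ : ℝ) / ((ℓ : ℝ) + 1))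

/-! Since `V*_L` is strictly convex on `r > 0`, the sublevel set `{V*_L ≤ E}` is the interval
`[r_m, r_M]`; it grows with `E` while the integrand `√(E - V*_L)` increases, so `a_r` is strictly
increasing in `E`. The substitution `r ↦ μ r`, `L ↦ μ^{ℓ+1} L` multiplies `V*_L` by `μ^{2ℓ}`, hence
maps turning points to turning points and gives `a_r(μ^{2ℓ} E, μ^{ℓ+1} L) = μ^{ℓ+1} a_r(E, L)`.
With `λ = μ^{ℓ+1}`, part (ii) is injectivity from part (i). -/

open Set intervalIntegral

lemma StrictConvexOn.const_mul {E : Type*} [AddCommMonoid E] [Module ℝ E] {s : Set E}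
    {f : E → ℝ} {c : ℝ} (hf : StrictConvexOn ℝ s f) (hc : 0 < c) :
    StrictConvexOn ℝ s fun x => c * f x := by
  refine ⟨hf.1, fun x hx y hy hxy a b ha hb hab => ?_⟩
  have := mul_lt_mul_of_pos_left (hf.2 hx hy hxy ha hb hab) hc
  simp only [smul_eq_mul] at this ⊢
  linarith

lemma StrictConvexOn.lt_of_mem_Ioo {s : Set ℝ} {f : ℝ → ℝ} {x y z E : ℝ}
    (hf : StrictConvexOn ℝ s f) (hx : x ∈ s) (hz : z ∈ s) (hy : y ∈ Ioo x z)
    (hxE : f x ≤ E) (hzE : f z ≤ E) : f y < E :=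
  (hf.lt_on_openSegment hx hz (hy.1.trans hy.2).ne
    ((openSegment_eq_Ioo (hy.1.trans hy.2)).symm ▸ hy)).trans_le (max_le hxE hzE)

theorem integral_sqrt_sub_lt_of_strictConvexOn {s : Set ℝ} {V : ℝ → ℝ}
    (hV : StrictConvexOn ℝ s V) (hVc : ContinuousOn V s) {E₁ E₂ a₁ b₁ a₂ b₂ : ℝ}
    (hE : E₁ < E₂) (ha₁ : a₁ ∈ s) (hb₁ : b₁ ∈ s) (ha₂ : a₂ ∈ s) (hb₂ : b₂ ∈ s)
    (hab₁ : a₁ < b₁) (hab₂ : a₂ < b₂) (hVa₁ : V a₁ = E₁) (hVb₁ : V b₁ = E₁)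
    (hVa₂ : V a₂ = E₂) (hVb₂ : V b₂ = E₂) :
    ∫ r in a₁..b₁, √(E₁ - V r) < ∫ r in a₂..b₂, √(E₂ - V r) := by
  -- the sublevel set `{V ≤ E₂}` is an interval, so it contains `[a₁, b₁]`
  have ha : a₂ ≤ a₁ := not_lt.1 fun h =>
    (hV.lt_of_mem_Ioo ha₁ hb₂ ⟨h, hab₂⟩ (hVa₁ ▸ hE.le) hVb₂.le).ne hVa₂
  have hb : b₁ ≤ b₂ := not_lt.1 fun h =>
    (hV.lt_of_mem_Ioo ha₂ hb₁ ⟨hab₂, h⟩ hVa₂.le (hVb₁ ▸ hE.le)).ne hVb₂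
  have hcont (E : ℝ) : ContinuousOn (fun r => √(E - V r)) (Icc a₂ b₂) :=
    (continuousOn_const.sub (hVc.mono (hV.1.ordConnected.out ha₂ hb₂))).sqrt
  calc ∫ r in a₁..b₁, √(E₁ - V r)
      < ∫ r in a₁..b₁, √(E₂ - V r) :=
        integral_lt_integral_of_continuousOn_of_le_of_exists_lt hab₁
          ((hcont E₁).mono (Icc_subset_Icc ha hb)) ((hcont E₂).mono (Icc_subset_Icc ha hb))
          (fun r _ => Real.sqrt_le_sqrt (by linarith))
          ⟨a₁, left_mem_Icc.2 hab₁.le, by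
            rw [hVa₁, sub_self, Real.sqrt_zero]; exact Real.sqrt_pos.2 (by linarith)⟩
    _ ≤ ∫ r in a₂..b₂, √(E₂ - V r) :=
        integral_mono_interval ha hab₁.le hb
          (Filter.Eventually.of_forall fun _ => Real.sqrt_nonneg _)
          ((hcont E₂).intervalIntegrable_of_Icc hab₂.le)

lemma strictConvexOn_Veff {ℓ : ℕ} (hℓ : ℓ ≠ 0) (L : ℝ) :
    StrictConvexOn ℝ (Ioi (0 : ℝ)) (Veff ℓ L) := by
  have hcentrifugal : ConvexOn ℝ (Ioi 0) fun r : ℝ => L ^ 2 / 2 * r ^ (-2 : ℤ) :=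
    (convexOn_zpow (-2)).smul (by positivity)
  have hconfining : StrictConvexOn ℝ (Ioi 0) fun r : ℝ => (2 * (ℓ : ℝ))⁻¹ * r ^ (2 * ℓ) :=
    ((Even.strictConvexOn_pow (even_two_mul ℓ) (by omega)).subset (subset_univ _)
      (convex_Ioi 0)).const_mul (by positivity)
  refine (hcentrifugal.add_strictConvexOn hconfining).congr fun r (hr : 0 < r) => ?_
  simp only [Veff, Pi.add_apply, zpow_neg, zpow_ofNat]
  field_simp

lemma continuousOn_Veff (ℓ : ℕ) (L : ℝ) : ContinuousOn (Veff ℓ L) (Ioi (0 : ℝ)) :=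
  ((continuousOn_const.div (by fun_prop) fun r (hr : 0 < r) => by positivity).add
    (by fun_prop))

lemma VeffMin_pos {ℓ : ℕ} (hℓ : ℓ ≠ 0) {L : ℝ} (hL : L ≠ 0) : 0 < VeffMin ℓ L := by
  have : 0 < |L| := abs_pos.2 hL
  unfold VeffMin
  positivity

lemma mem_Dstar_of_VeffMin_lt {ℓ : ℕ} (hℓ : ℓ ≠ 0) {L E : ℝ} (hL : L ≠ 0)
    (hE : VeffMin ℓ L < E) : (E, L) ∈ Dstar ℓ := by
  have hp : (0 : ℝ) < 2 * ℓ / (ℓ + 1) := by positivity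
  have hE₀ : 0 < E := (VeffMin_pos hℓ hL).trans hE
  refine ⟨hE₀, abs_pos.2 hL, ?_⟩
  show |L| < _
  rw [← inv_div (2 * (ℓ : ℝ)), Real.lt_rpow_inv_iff_of_pos (abs_nonneg L) (by positivity) hp]
  calc |L| ^ (2 * (ℓ : ℝ) / (ℓ + 1)) = 2 * ℓ / (ℓ + 1) * VeffMin ℓ L := by
        unfold VeffMin; field_simp
    _ < 2 * ℓ / (ℓ + 1) * E := mul_lt_mul_of_pos_left hE hp
    _ = 2 * ℓ * E / (ℓ + 1) := by ring

lemma Veff_scaling {μ : ℝ} (hμ : μ ≠ 0) (ℓ : ℕ) (L r : ℝ) :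
    Veff ℓ (μ ^ (ℓ + 1) * L) (μ * r) = μ ^ (2 * ℓ) * Veff ℓ L r := by
  rcases eq_or_ne r 0 with rfl | hr
  · rcases eq_or_ne ℓ 0 with rfl | hℓ <;> simp [Veff, *]
  unfold Veff
  field_simp
  ring

lemma pow_succ_rpow_two_mul_div {μ : ℝ} (hμ : 0 ≤ μ) (ℓ : ℕ) :
    (μ ^ (ℓ + 1)) ^ (2 * (ℓ : ℝ) / ((ℓ : ℝ) + 1)) = μ ^ (2 * ℓ) := by
  rw [← Real.rpow_natCast μ (ℓ + 1), ← Real.rpow_mul hμ, ← Real.rpow_natCast μ (2 * ℓ)]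
  congr 1
  push_cast
  field_simp

lemma VeffMin_pow_mul_lt {ℓ : ℕ} {L E μ : ℝ} (hμ : 0 < μ) (hE : VeffMin ℓ L < E) :
    VeffMin ℓ (μ ^ (ℓ + 1) * L) < μ ^ (2 * ℓ) * E := by
  have hscale : VeffMin ℓ (μ ^ (ℓ + 1) * L) = μ ^ (2 * ℓ) * VeffMin ℓ L := by
    unfold VeffMin
    rw [abs_mul, abs_pow, abs_of_pos hμ, Real.mul_rpow (by positivity) (abs_nonneg L),
      pow_succ_rpow_two_mul_div hμ.le]
    ring
  rw [hscale]
  exact mul_lt_mul_of_pos_left hE (by positivity)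

def IsTurningPoints (ℓ : ℕ) (rm rM : ℝ → ℝ → ℝ) : Prop :=
  ∀ E L : ℝ, (E, L) ∈ Dstar ℓ →
    0 < rm E L ∧ rm E L < rM E L ∧
    Veff ℓ L (rm E L) = E ∧ Veff ℓ L (rM E L) = E ∧
    ∀ r : ℝ, 0 < r → Veff ℓ L r = E → r = rm E L ∨ r = rM E L

section TurningPoints

variable {ℓ : ℕ} {rm rM : ℝ → ℝ → ℝ}

theorem aR_strictMonoOn (hℓ : ℓ ≠ 0) (h : IsTurningPoints ℓ rm rM) {L : ℝ} (hL : L ≠ 0) :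
    StrictMonoOn (fun E => aR ℓ rm rM E L) (Ioi (VeffMin ℓ L)) := by
  intro E₁ hE₁ E₂ hE₂ hE
  obtain ⟨hm₁, hmM₁, hVm₁, hVM₁, -⟩ := h E₁ L (mem_Dstar_of_VeffMin_lt hℓ hL hE₁)
  obtain ⟨hm₂, hmM₂, hVm₂, hVM₂, -⟩ := h E₂ L (mem_Dstar_of_VeffMin_lt hℓ hL hE₂)
  exact mul_lt_mul_of_pos_left
    (integral_sqrt_sub_lt_of_strictConvexOn (strictConvexOn_Veff hℓ L) (continuousOn_Veff ℓ L)
      hE hm₁ (hm₁.trans hmM₁) hm₂ (hm₂.trans hmM₂) hmM₁ hmM₂ hVm₁ hVM₁ hVm₂ hVM₂)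
    (by positivity)

lemma IsTurningPoints.scaling (h : IsTurningPoints ℓ rm rM) (hℓ : ℓ ≠ 0) {L E μ : ℝ}
    (hL : L ≠ 0) (hE : VeffMin ℓ L < E) (hμ : 0 < μ) :
    rm (μ ^ (2 * ℓ) * E) (μ ^ (ℓ + 1) * L) = μ * rm E L ∧
      rM (μ ^ (2 * ℓ) * E) (μ ^ (ℓ + 1) * L) = μ * rM E L := by
  obtain ⟨hm, hmM, hVm, hVM, -⟩ := h E L (mem_Dstar_of_VeffMin_lt hℓ hL hE)
  obtain ⟨-, hmM', -, -, huniq⟩ :=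
    h _ _ (mem_Dstar_of_VeffMin_lt hℓ (mul_ne_zero (by positivity) hL)
      (VeffMin_pow_mul_lt hμ hE))
  have hm' := huniq (μ * rm E L) (by positivity) (by rw [Veff_scaling hμ.ne', hVm])
  have hM' := huniq (μ * rM E L) (mul_pos hμ (hm.trans hmM))
    (by rw [Veff_scaling hμ.ne', hVM])
  have : μ * rm E L < μ * rM E L := mul_lt_mul_of_pos_left hmM hμ
  rcases hm' with hm' | hm' <;> rcases hM' with hM' | hM' <;> constructor <;> linarith

theorem aR_scaling (h : IsTurningPoints ℓ rm rM) (hℓ : ℓ ≠ 0) {L E μ : ℝ}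
    (hL : L ≠ 0) (hE : VeffMin ℓ L < E) (hμ : 0 < μ) :
    aR ℓ rm rM (μ ^ (2 * ℓ) * E) (μ ^ (ℓ + 1) * L) = μ ^ (ℓ + 1) * aR ℓ rm rM E L := by
  obtain ⟨hm, hM⟩ := h.scaling hℓ hL hE hμ
  have hintegrand (r : ℝ) :
      √(μ ^ (2 * ℓ) * E - Veff ℓ (μ ^ (ℓ + 1) * L) (μ * r)) = μ ^ ℓ * √(E - Veff ℓ L r) := by
    rw [Veff_scaling hμ.ne', ← mul_sub, Real.sqrt_mul (by positivity), pow_mul',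
      Real.sqrt_sq (by positivity)]
  unfold aR
  rw [hm, hM, ← smul_integral_comp_mul_left]
  simp only [hintegrand, integral_const_mul, smul_eq_mul]
  ring

end TurningPoints

theorem stmt6 (ℓ : ℕ) (hℓ : 2 ≤ ℓ) (rm rM : ℝ → ℝ → ℝ)
    (hroots : ∀ E L : ℝ, (E, L) ∈ Dstar ℓ →
      0 < rm E L ∧ rm E L < rM E L ∧
      Veff ℓ L (rm E L) = E ∧ Veff ℓ L (rM E L) = E ∧
      ∀ r : ℝ, 0 < r → Veff ℓ L r = E → r = rm E L ∨ r = rM E L)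
    (L : ℝ) (hL : L ≠ 0) :
    StrictMonoOn (fun E => aR ℓ rm rM E L) (Set.Ioi (VeffMin ℓ L)) ∧
    ∀ lam : ℝ, 0 < lam → ∀ E E' : ℝ,
      VeffMin ℓ L < E → VeffMin ℓ (lam * L) < E' →
      aR ℓ rm rM E' (lam * L) = lam * aR ℓ rm rM E L →
      E' = lam ^ (2 * (ℓ : ℝ) / ((ℓ : ℝ) + 1)) * E := by
  have hℓ₀ : ℓ ≠ 0 := by omega
  refine ⟨aR_strictMonoOn hℓ₀ hroots hL, fun lam hlam E E' hE hE' haR => ?_⟩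
  obtain ⟨μ, hμ, rfl⟩ : ∃ μ > 0, μ ^ (ℓ + 1) = lam :=
    ⟨lam ^ ((ℓ + 1 : ℕ) : ℝ)⁻¹, by positivity, Real.rpow_inv_natCast_pow hlam.le ℓ.succ_ne_zero⟩
  rw [pow_succ_rpow_two_mul_div hμ.le]
  exact (aR_strictMonoOn hℓ₀ hroots (mul_ne_zero (by positivity) hL)).injOn hE'
    (VeffMin_pow_mul_lt hμ hE)
    (haR.trans (aR_scaling hroots hℓ₀ hL hE hμ).symm)
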